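/- arXiv:2511.07254 — 4 statements merged into one kernel-verified Lean document; each statement's English description precedes it below -/
import Mathlib

section
/- (Lemma 2.1.) Let ξ, η : ℤ → ℂ^T be arbitrary sequences and ζ = ξ + η. Let a(0),…,a(N) ∈ ℂ^T be given, and define b_N(k) = Σ_{m=k}^{N} d_μ̄(m−k) · a(m) for 0 ≤ k ≤ N, and v_N(k) = Σ_{l=0}^{min(N, k+n(γ))} e_γ(l−k) · b_N(l) for −n(γ) ≤ k ≤ −1. Then Σ_{k=0}^{N} ⟨a(k), ξ(k)⟩ = Σ_{k=0}^{N} ⟨b_N(k), χ^{(d)}_{μ̄,s̄}(ζ(k))⟩ − Σ_{k=0}^{N} ⟨a(k), η(k)⟩ − Σ_{k=−n(γ)}^{−1} ⟨v_N(k), ζ(k)⟩, where ⟨u,w⟩ = u^⊤ w and the GM increment χ^{(d)}_{μ̄,s̄} is applied coordinatewise to ζ. -/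
/-- Backward difference with step `c`: `(1 - B_c) ξ (m) = ξ(m) - ξ(m - c)`. -/
def diffStep {V : Type*} [AddCommGroup V] (c : ℤ) (f : ℤ → V) : ℤ → V :=
  fun m => f m - f (m - c)

/-- Generalized multiple (GM) increment with combined steps `c i` (standing for `μ i * s i`)
and orders `d i`: `(∏ i, (1 - B_{c i})^{d i}) ξ`. -/
def gmInc {V : Type*} [AddCommGroup V] {r : ℕ} (d : Fin r → ℕ) (c : Fin r → ℤ)
    (f : ℤ → V) : ℤ → V :=
  (List.finRange r).foldr (fun i g => (diffStep (c i))^[d i] g) f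

/-- The formal geometric series `Σ_j X^{c j}` in `ℤ⟦X⟧`. -/
noncomputable def geomPS (c : ℕ) : PowerSeries ℤ :=
  PowerSeries.mk fun k => if c ∣ k then 1 else 0

/-- The coefficients `e_γ(z)` (indexed by `z : ℤ`, vanishing for `z < 0` and `z > n(γ)`)
of the polynomial `∏ i, (1 - X^{μ i * s i})^{d i}`. -/
noncomputable def eGammaZ (r : ℕ) (d s μ : Fin r → ℕ) (z : ℤ) : ℤ :=
  if 0 ≤ z then (∏ i, ((1 : Polynomial ℤ) - Polynomial.X ^ (μ i * s i)) ^ (d i)).coeff z.toNat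
  else 0

/-- The coefficients `d_μ̄(k)` of the power series `∏ i, (Σ_j X^{μ i * s i * j})^{d i}`. -/
noncomputable def dMu (r : ℕ) (d s μ : Fin r → ℕ) (k : ℕ) : ℤ :=
  PowerSeries.coeff k (∏ i, (geomPS (μ i * s i)) ^ (d i))

/-- The bilinear pairing `⟨u, w⟩ = uᵀ w = Σ_p u_p w_p` on `ℂ^T`. -/
noncomputable def dotC {T : ℕ} (u w : Fin T → ℂ) : ℂ := ∑ p, u p * w p

/-! ### Auxiliary machinery -/

open Polynomial Finset

noncomputable def shiftOp {V : Type*} [AddCommGroup V] (p : Polynomial ℤ) (f : ℤ → V) : ℤ → V :=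
  fun m => p.sum fun z a => a • f (m - z)

lemma shiftOp_monomial {V : Type*} [AddCommGroup V] (n : ℕ) (a : ℤ) (f : ℤ → V) :
    shiftOp (Polynomial.monomial n a) f = fun m => a • f (m - n) := by
  funext m
  simp [shiftOp, Polynomial.sum_monomial_index]

lemma shiftOp_add {V : Type*} [AddCommGroup V] (p q : Polynomial ℤ) (f : ℤ → V) :
    shiftOp (p + q) f = shiftOp p f + shiftOp q f := by
  funext m
  simpa [shiftOp] using Polynomial.sum_add_index p q (fun z a => a • f (m - z))
    (by simp) (by intros; simp [add_smul])

lemma shiftOp_monomial_mul {V : Type*} [AddCommGroup V] (n : ℕ) (a : ℤ) (q : Polynomial ℤ)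
    (f : ℤ → V) :
    shiftOp (Polynomial.monomial n a * q) f = fun m => a • shiftOp q f (m - n) := by
  induction q using Polynomial.induction_on' with
  | add p q hp hq =>
    funext m
    simp [mul_add, shiftOp_add, hp, hq, smul_add]
  | monomial k b =>
    funext m
    rw [Polynomial.monomial_mul_monomial, shiftOp_monomial, shiftOp_monomial]
    simp only []
    have : m - ((n + k : ℕ) : ℤ) = m - n - k := by push_cast; ring
    rw [this, mul_smul]

lemma shiftOp_mul {V : Type*} [AddCommGroup V] (p q : Polynomial ℤ) (f : ℤ → V) :
    shiftOp (p * q) f = shiftOp p (shiftOp q f) := by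
  induction p using Polynomial.induction_on' with
  | add p p' hp hp' => rw [add_mul, shiftOp_add, hp, hp', shiftOp_add]
  | monomial n a => rw [shiftOp_monomial_mul, shiftOp_monomial]

lemma shiftOp_one {V : Type*} [AddCommGroup V] (f : ℤ → V) : shiftOp (1 : Polynomial ℤ) f = f := by
  have : (1 : Polynomial ℤ) = Polynomial.monomial 0 1 := by simp
  rw [this, shiftOp_monomial]
  simp

lemma shiftOp_pow {V : Type*} [AddCommGroup V] (p : Polynomial ℤ) (k : ℕ) (f : ℤ → V) :
    shiftOp (p ^ k) f = (shiftOp p)^[k] f := by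
  induction k with
  | zero => simp [shiftOp_one]
  | succ k ih =>
    rw [pow_succ, mul_comm, shiftOp_mul, ih, Function.iterate_succ_apply']

lemma shiftOp_diff {V : Type*} [AddCommGroup V] (c : ℕ) (f : ℤ → V) :
    shiftOp ((1 : Polynomial ℤ) - Polynomial.X ^ c) f = diffStep (c : ℤ) f := by
  have h : (1 : Polynomial ℤ) - Polynomial.X ^ c
      = Polynomial.monomial 0 1 + Polynomial.monomial c (-1) := by
    simp [Polynomial.X_pow_eq_monomial, sub_eq_add_neg]
  rw [h, shiftOp_add, shiftOp_monomial, shiftOp_monomial]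
  funext m
  simp [diffStep, sub_eq_add_neg]

lemma gmInc_eq_shiftOp {V : Type*} [AddCommGroup V] {r : ℕ} (d : Fin r → ℕ) (c : Fin r → ℕ)
    (f : ℤ → V) :
    gmInc d (fun i => ((c i : ℕ) : ℤ)) f
      = shiftOp (∏ i, ((1 : Polynomial ℤ) - Polynomial.X ^ (c i)) ^ (d i)) f := by
  rw [Fin.prod_univ_def, gmInc]
  induction (List.finRange r) with
  | nil => simp [shiftOp_one]
  | cons i L ih =>
    simp only [List.foldr_cons, List.map_cons, List.prod_cons, shiftOp_mul, shiftOp_pow,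
      ih, shiftOp_diff]
    rw [show shiftOp ((1 : Polynomial ℤ) - Polynomial.X ^ (c i)) = diffStep ((c i : ℕ) : ℤ) from
      funext fun g => shiftOp_diff (c i) g]

lemma natDegree_P_le {r : ℕ} (d s μ : Fin r → ℕ) :
    (∏ i, ((1 : Polynomial ℤ) - Polynomial.X ^ (μ i * s i)) ^ (d i)).natDegree
      ≤ ∑ i, μ i * s i * d i := by
  refine le_trans (Polynomial.natDegree_prod_le _ _) (Finset.sum_le_sum fun i _ => ?_)
  refine le_trans (Polynomial.natDegree_pow_le) ?_
  have h1 : ((1 : Polynomial ℤ) - Polynomial.X ^ (μ i * s i)).natDegree ≤ μ i * s i := by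
    refine le_trans (Polynomial.natDegree_sub_le _ _) ?_
    simp [Polynomial.natDegree_X_pow]
  calc d i * ((1 : Polynomial ℤ) - Polynomial.X ^ (μ i * s i)).natDegree
      ≤ d i * (μ i * s i) := Nat.mul_le_mul_left _ h1
    _ = μ i * s i * d i := by ring

lemma shiftOp_eq_sum_range {V : Type*} [AddCommGroup V] (p : Polynomial ℤ) (n : ℕ)
    (hn : p.natDegree < n) (f : ℤ → V) (m : ℤ) :
    shiftOp p f m = ∑ z ∈ Finset.range n, p.coeff z • f (m - z) := by
  rw [shiftOp]
  exact Polynomial.sum_over_range' p (by simp) n hn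

lemma geom_inv (c : ℕ) (hc : 0 < c) :
    ((1 - Polynomial.X ^ c : Polynomial ℤ) : PowerSeries ℤ) * geomPS c = 1 := by
  have hco : ((1 - Polynomial.X ^ c : Polynomial ℤ) : PowerSeries ℤ)
      = 1 - (PowerSeries.X : PowerSeries ℤ) ^ c := by
    push_cast
    simp
  rw [hco, sub_mul, one_mul]
  ext n
  rw [map_sub, mul_comm, PowerSeries.coeff_mul_X_pow']
  rcases Nat.eq_zero_or_pos n with hn | hn
  · subst hn
    simp [geomPS, hc.ne']
  · rw [PowerSeries.coeff_one, if_neg hn.ne']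
    by_cases hcn : c ≤ n
    · rw [if_pos hcn]
      have : c ∣ n ↔ c ∣ n - c := by
        constructor
        · intro h; exact (Nat.dvd_sub h dvd_rfl)
        · intro h
          have := Nat.dvd_add h (dvd_refl c)
          rwa [Nat.sub_add_cancel hcn] at this
      simp only [geomPS, PowerSeries.coeff_mk]
      by_cases h : c ∣ n
      · rw [if_pos h, if_pos (this.mp h), sub_self]
      · rw [if_neg h, if_neg (fun hh => h (this.mpr hh)), sub_self]
    · rw [if_neg hcn]
      have : ¬ c ∣ n := fun h => hcn (Nat.le_of_dvd hn h)
      simp [geomPS, this]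

lemma conv_delta {r : ℕ} (d s μ : Fin r → ℕ) (hs : ∀ i, 0 < s i) (hμ : ∀ i, 0 < μ i) (n : ℕ) :
    ∑ z ∈ Finset.range (n + 1),
      (∏ i, ((1 : Polynomial ℤ) - Polynomial.X ^ (μ i * s i)) ^ (d i)).coeff z
        * dMu r d s μ (n - z) = if n = 0 then 1 else 0 := by
  set P : Polynomial ℤ := ∏ i, ((1 : Polynomial ℤ) - Polynomial.X ^ (μ i * s i)) ^ (d i) with hP
  have key : (P : PowerSeries ℤ) * (∏ i, (geomPS (μ i * s i)) ^ (d i)) = 1 := by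
    have hcoe : ((P : Polynomial ℤ) : PowerSeries ℤ)
        = ∏ i, (((1 : Polynomial ℤ) - Polynomial.X ^ (μ i * s i) : Polynomial ℤ)
            : PowerSeries ℤ) ^ (d i) := by
      rw [hP, ← Polynomial.coeToPowerSeries.ringHom_apply, map_prod]
      exact Finset.prod_congr rfl fun i _ => by
        rw [map_pow, Polynomial.coeToPowerSeries.ringHom_apply]
    rw [hcoe, ← Finset.prod_mul_distrib]
    rw [Finset.prod_congr rfl fun i _ => by
      rw [← mul_pow, geom_inv (μ i * s i) (Nat.mul_pos (hμ i) (hs i)), one_pow]]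
    simp
  have h := congrArg (PowerSeries.coeff n) key
  rw [PowerSeries.coeff_mul, PowerSeries.coeff_one] at h
  rw [Finset.Nat.sum_antidiagonal_eq_sum_range_succ (fun i j =>
    (PowerSeries.coeff i) (P : PowerSeries ℤ) * (PowerSeries.coeff j)
      (∏ i, (geomPS (μ i * s i)) ^ (d i)))] at h
  simpa [dMu, Polynomial.coeff_coe] using h

lemma eGammaZ_neg (r : ℕ) (d s μ : Fin r → ℕ) (z : ℤ) (hz : z < 0) :
    eGammaZ r d s μ z = 0 := by
  rw [eGammaZ, if_neg (not_le.mpr hz)]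

lemma eGammaZ_coeff (r : ℕ) (d s μ : Fin r → ℕ) (z : ℤ) (hz : 0 ≤ z) :
    eGammaZ r d s μ z
      = (∏ i, ((1 : Polynomial ℤ) - Polynomial.X ^ (μ i * s i)) ^ (d i)).coeff z.toNat :=
  if_pos hz

lemma eGammaZ_big (r : ℕ) (d s μ : Fin r → ℕ) (z : ℤ)
    (hz : ((∑ i, μ i * s i * d i : ℕ) : ℤ) < z) :
    eGammaZ r d s μ z = 0 := by
  have h0 : (0 : ℤ) ≤ z := le_of_lt (lt_of_le_of_lt (by positivity) hz)
  rw [eGammaZ_coeff r d s μ z h0]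
  apply Polynomial.coeff_eq_zero_of_natDegree_lt
  have := natDegree_P_le d s μ
  omega

lemma key_delta {r : ℕ} (d s μ : Fin r → ℕ) (hs : ∀ i, 0 < s i) (hμ : ∀ i, 0 < μ i)
    (N m t : ℕ) (ht : t ≤ N) :
    ∑ k ∈ Finset.range (N + 1),
      eGammaZ r d s μ ((k : ℤ) - (m : ℤ)) * (if k ≤ t then dMu r d s μ (t - k) else 0)
      = if t = m then 1 else 0 := by
  by_cases hmt : m ≤ t
  · have hsub : Finset.Icc m t ⊆ Finset.range (N + 1) := by
      intro k hk
      simp only [Finset.mem_Icc] at hk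
      simp only [Finset.mem_range]
      omega
    rw [← Finset.sum_subset hsub ?_]
    · rw [← Finset.Ico_add_one_right_eq_Icc, Finset.sum_Ico_eq_sum_range,
        show t + 1 - m = (t - m) + 1 by omega]
      have heq : ∀ z ∈ Finset.range ((t - m) + 1),
          eGammaZ r d s μ ((↑(m + z) : ℤ) - (m : ℤ))
            * (if m + z ≤ t then dMu r d s μ (t - (m + z)) else 0)
          = (∏ i, ((1 : Polynomial ℤ) - Polynomial.X ^ (μ i * s i)) ^ (d i)).coeff z
            * dMu r d s μ ((t - m) - z) := by
        intro z hz
        simp only [Finset.mem_range] at hz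
        rw [if_pos (by omega), eGammaZ_coeff r d s μ _ (by omega)]
        congr 2
        · omega
        · omega
      rw [Finset.sum_congr rfl heq, conv_delta d s μ hs hμ (t - m),
        if_congr (show t - m = 0 ↔ t = m by omega) rfl rfl]
    · intro k hk hk'
      simp only [Finset.mem_range] at hk
      simp only [Finset.mem_Icc] at hk'
      by_cases h : k ≤ t
      · rw [eGammaZ_neg r d s μ _ (by omega), zero_mul]
      · rw [if_neg h, mul_zero]
  · rw [if_neg (by omega)]
    refine Finset.sum_eq_zero fun k hk => ?_
    by_cases h : k ≤ t
    · rw [eGammaZ_neg r d s μ _ (by omega), zero_mul]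
    · rw [if_neg h, mul_zero]

lemma dotC_add_right {T : ℕ} (u x y : Fin T → ℂ) :
    dotC u (x + y) = dotC u x + dotC u y := by
  simp [dotC, mul_add, Finset.sum_add_distrib]

lemma dotC_smul_left {T : ℕ} (c : ℂ) (u w : Fin T → ℂ) :
    dotC (c • u) w = c * dotC u w := by
  simp [dotC, Finset.mul_sum, mul_assoc]

lemma dotC_zsmul_right {T : ℕ} (n : ℤ) (u w : Fin T → ℂ) :
    dotC u (n • w) = (n : ℂ) * dotC u w := by
  simp only [dotC, Pi.smul_apply, zsmul_eq_mul, Finset.mul_sum]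
  exact Finset.sum_congr rfl fun p _ => by push_cast; ring

lemma dotC_sum_left {T : ℕ} {α : Type*} (F : Finset α) (f : α → Fin T → ℂ) (w : Fin T → ℂ) :
    dotC (∑ i ∈ F, f i) w = ∑ i ∈ F, dotC (f i) w := by
  simp only [dotC, Finset.sum_apply, Finset.sum_mul]
  exact Finset.sum_comm

lemma dotC_sum_right {T : ℕ} {α : Type*} (F : Finset α) (u : Fin T → ℂ) (f : α → Fin T → ℂ) :
    dotC u (∑ i ∈ F, f i) = ∑ i ∈ F, dotC u (f i) := by
  simp only [dotC, Finset.sum_apply, Finset.mul_sum]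
  exact Finset.sum_comm

/-- Lemma 2.1: the representation
`A_N ξ = B_N χζ - A_N η - V_N ζ` for arbitrary sequences `ξ, η` and `ζ = ξ + η`. -/
theorem functional_representation (T : ℕ) (ξ η : ℤ → Fin T → ℂ) (N : ℕ)
    (a : ℕ → Fin T → ℂ) (r : ℕ) (d s μ : Fin r → ℕ)
    (hd : ∀ i, 0 < d i) (hs : ∀ i, 0 < s i) (hμ : ∀ i, 0 < μ i) :
    ∀ (ζ : ℤ → Fin T → ℂ), ζ = (fun m => ξ m + η m) →
    ∀ (nγ : ℕ), nγ = ∑ i, μ i * s i * d i →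
    ∀ (b : ℕ → Fin T → ℂ),
      b = (fun k => ∑ m ∈ Finset.Icc k N, ((dMu r d s μ (m - k) : ℤ) : ℂ) • a m) →
    ∀ (v : ℤ → Fin T → ℂ),
      v = (fun k => ∑ l ∈ Finset.range (min N (k + (nγ : ℤ)).toNat + 1),
        ((eGammaZ r d s μ ((l : ℤ) - k) : ℤ) : ℂ) • b l) →
    (∑ k ∈ Finset.range (N + 1), dotC (a k) (ξ (k : ℤ))) =
      (∑ k ∈ Finset.range (N + 1),
          dotC (b k) (gmInc d (fun i => ((μ i * s i : ℕ) : ℤ)) ζ (k : ℤ)))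
      - (∑ k ∈ Finset.range (N + 1), dotC (a k) (η (k : ℤ)))
      - (∑ j ∈ Finset.range nγ, dotC (v (-(j + 1 : ℤ))) (ζ (-(j + 1 : ℤ)))) := by
  intro ζ hζ nγ hnγ b hb v hv
  set P : Polynomial ℤ := ∏ i, ((1 : Polynomial ℤ) - Polynomial.X ^ (μ i * s i)) ^ (d i) with hP
  have hdeg : P.natDegree < nγ + 1 := by
    have := natDegree_P_le d s μ
    rw [← hP] at this
    omega
  -- the GM increment expanded as a sum
  have hgm : ∀ k : ℤ, gmInc d (fun i => ((μ i * s i : ℕ) : ℤ)) ζ k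
      = ∑ z ∈ Finset.range (nγ + 1), P.coeff z • ζ (k - z) := by
    intro k
    rw [gmInc_eq_shiftOp d (fun i => μ i * s i) ζ]
    exact shiftOp_eq_sum_range P (nγ + 1) hdeg ζ k
  -- Claim 1
  have claim1 : ∀ k : ℕ, k ≤ N →
      dotC (b k) (gmInc d (fun i => ((μ i * s i : ℕ) : ℤ)) ζ (k : ℤ))
        = ∑ m ∈ Finset.Icc (-(nγ : ℤ)) (N : ℤ),
            ((eGammaZ r d s μ ((k : ℤ) - m) : ℤ) : ℂ) * dotC (b k) (ζ m) := by
    intro k hk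
    rw [hgm, dotC_sum_right]
    have step1 : ∑ z ∈ Finset.range (nγ + 1), dotC (b k) (P.coeff z • ζ ((k : ℤ) - z))
        = ∑ m ∈ Finset.Icc ((k : ℤ) - nγ) (k : ℤ),
            ((eGammaZ r d s μ ((k : ℤ) - m) : ℤ) : ℂ) * dotC (b k) (ζ m) := by
      refine Finset.sum_nbij' (fun z => (k : ℤ) - z) (fun m => ((k : ℤ) - m).toNat)
        ?_ ?_ ?_ ?_ ?_
      · intro z hz
        simp only [Finset.mem_range] at hz
        simp only [Finset.mem_Icc]
        try dsimp only
        omega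
      · intro m hm
        simp only [Finset.mem_Icc] at hm
        simp only [Finset.mem_range]
        try dsimp only
        omega
      · intro z hz
        simp only [Finset.mem_range] at hz
        try dsimp only
        omega
      · intro m hm
        simp only [Finset.mem_Icc] at hm
        try dsimp only
        omega
      · intro z hz
        simp only [Finset.mem_range] at hz
        try dsimp only
        rw [dotC_zsmul_right]
        have harg : eGammaZ r d s μ ((k : ℤ) - ((k : ℤ) - (z : ℕ))) = P.coeff z := by
          rw [eGammaZ_coeff r d s μ _ (by omega), ← hP]
          congr 1
          omega
        rw [harg]
    rw [step1]
    refine Finset.sum_subset ?_ ?_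
    · intro m hm
      simp only [Finset.mem_Icc] at hm ⊢
      omega
    · intro m hm hm'
      simp only [Finset.mem_Icc] at hm hm'
      by_cases h : (k : ℤ) < m
      · rw [eGammaZ_neg r d s μ _ (by omega)]
        simp
      · rw [eGammaZ_big r d s μ _ (by rw [← hnγ]; omega)]
        simp
  -- Claim 2
  have claim2 : ∀ m : ℕ, m ≤ N →
      (∑ k ∈ Finset.range (N + 1),
        ((eGammaZ r d s μ ((k : ℤ) - (m : ℤ)) : ℤ) : ℂ) • b k) = a m := by
    intro m hm
    have hbk : ∀ k : ℕ, b k = ∑ t ∈ Finset.range (N + 1),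
        (if k ≤ t then ((dMu r d s μ (t - k) : ℤ) : ℂ) • a t else 0) := by
      intro k
      rw [hb]
      simp only []
      rw [← Finset.sum_filter]
      congr 1
      ext t
      simp only [Finset.mem_Icc, Finset.mem_filter, Finset.mem_range]
      omega
    calc ∑ k ∈ Finset.range (N + 1),
          ((eGammaZ r d s μ ((k : ℤ) - (m : ℤ)) : ℤ) : ℂ) • b k
        = ∑ k ∈ Finset.range (N + 1), ∑ t ∈ Finset.range (N + 1),
            ((eGammaZ r d s μ ((k : ℤ) - (m : ℤ))
              * (if k ≤ t then dMu r d s μ (t - k) else 0) : ℤ) : ℂ) • a t := by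
          refine Finset.sum_congr rfl fun k _ => ?_
          rw [hbk k, Finset.smul_sum]
          refine Finset.sum_congr rfl fun t _ => ?_
          by_cases h : k ≤ t
          · rw [if_pos h, if_pos h, smul_smul, Int.cast_mul]
          · rw [if_neg h, if_neg h, smul_zero, mul_zero, Int.cast_zero, zero_smul]
      _ = ∑ t ∈ Finset.range (N + 1),
            ((∑ k ∈ Finset.range (N + 1), eGammaZ r d s μ ((k : ℤ) - (m : ℤ))
              * (if k ≤ t then dMu r d s μ (t - k) else 0) : ℤ) : ℂ) • a t := by
          rw [Finset.sum_comm]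
          refine Finset.sum_congr rfl fun t _ => ?_
          rw [Int.cast_sum, Finset.sum_smul]
      _ = ∑ t ∈ Finset.range (N + 1), (if t = m then (1 : ℂ) else 0) • a t := by
          refine Finset.sum_congr rfl fun t ht => ?_
          simp only [Finset.mem_range] at ht
          rw [key_delta d s μ hs hμ N m t (by omega)]
          by_cases h : t = m
          · rw [if_pos h, if_pos h, Int.cast_one]
          · rw [if_neg h, if_neg h, Int.cast_zero]
      _ = a m := by
          rw [Finset.sum_congr rfl (fun t _ => by rw [ite_smul, one_smul, zero_smul]),
            Finset.sum_ite_eq' (Finset.range (N + 1)) m a,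
            if_pos (by simp only [Finset.mem_range]; omega)]
  -- Claim 3
  have claim3 : ∀ j : ℕ, j < nγ →
      (∑ k ∈ Finset.range (N + 1),
        ((eGammaZ r d s μ ((k : ℤ) - (-(j + 1 : ℤ))) : ℤ) : ℂ) • b k) = v (-(j + 1 : ℤ)) := by
    intro j hj
    rw [hv]
    simp only []
    refine (Finset.sum_subset ?_ ?_).symm
    · intro k hk
      simp only [Finset.mem_range] at hk ⊢
      omega
    · intro k hk hk'
      simp only [Finset.mem_range] at hk hk'
      rw [eGammaZ_big r d s μ _ (by rw [← hnγ]; omega)]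
      simp
  -- the main combinatorial identity
  have main : ∑ k ∈ Finset.range (N + 1),
        dotC (b k) (gmInc d (fun i => ((μ i * s i : ℕ) : ℤ)) ζ (k : ℤ))
      = (∑ k ∈ Finset.range (N + 1), dotC (a k) (ζ (k : ℤ)))
        + ∑ j ∈ Finset.range nγ, dotC (v (-(j + 1 : ℤ))) (ζ (-(j + 1 : ℤ))) := by
    have hsplit : Finset.Icc (-(nγ : ℤ)) (N : ℤ)
        = Finset.Icc (-(nγ : ℤ)) (-1 : ℤ) ∪ Finset.Icc (0 : ℤ) (N : ℤ) := by
      ext x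
      simp only [Finset.mem_Icc, Finset.mem_union]
      omega
    have hdisj : Disjoint (Finset.Icc (-(nγ : ℤ)) (-1 : ℤ)) (Finset.Icc (0 : ℤ) (N : ℤ)) := by
      rw [Finset.disjoint_left]
      intro x hx hx'
      simp only [Finset.mem_Icc] at hx hx'
      omega
    calc ∑ k ∈ Finset.range (N + 1),
          dotC (b k) (gmInc d (fun i => ((μ i * s i : ℕ) : ℤ)) ζ (k : ℤ))
        = ∑ k ∈ Finset.range (N + 1), ∑ m ∈ Finset.Icc (-(nγ : ℤ)) (N : ℤ),
            ((eGammaZ r d s μ ((k : ℤ) - m) : ℤ) : ℂ) * dotC (b k) (ζ m) := by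
          refine Finset.sum_congr rfl fun k hk => ?_
          exact claim1 k (by simp only [Finset.mem_range] at hk; omega)
      _ = ∑ m ∈ Finset.Icc (-(nγ : ℤ)) (N : ℤ),
            dotC (∑ k ∈ Finset.range (N + 1),
              ((eGammaZ r d s μ ((k : ℤ) - m) : ℤ) : ℂ) • b k) (ζ m) := by
          rw [Finset.sum_comm]
          refine Finset.sum_congr rfl fun m _ => ?_
          rw [dotC_sum_left]
          exact Finset.sum_congr rfl fun k _ => (dotC_smul_left _ _ _).symm
      _ = (∑ m ∈ Finset.Icc (-(nγ : ℤ)) (-1 : ℤ),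
            dotC (∑ k ∈ Finset.range (N + 1),
              ((eGammaZ r d s μ ((k : ℤ) - m) : ℤ) : ℂ) • b k) (ζ m))
          + ∑ m ∈ Finset.Icc (0 : ℤ) (N : ℤ),
            dotC (∑ k ∈ Finset.range (N + 1),
              ((eGammaZ r d s μ ((k : ℤ) - m) : ℤ) : ℂ) • b k) (ζ m) := by
          rw [hsplit, Finset.sum_union hdisj]
      _ = (∑ j ∈ Finset.range nγ, dotC (v (-(j + 1 : ℤ))) (ζ (-(j + 1 : ℤ))))
          + ∑ k ∈ Finset.range (N + 1), dotC (a k) (ζ (k : ℤ)) := by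
          congr 1
          · refine (Finset.sum_nbij' (fun (j : ℕ) => -(j + 1 : ℤ))
              (fun m => (-m - 1).toNat) ?_ ?_ ?_ ?_ ?_).symm
            · intro j hj
              simp only [Finset.mem_range] at hj
              simp only [Finset.mem_Icc]
              try dsimp only
              omega
            · intro m hm
              simp only [Finset.mem_Icc] at hm
              simp only [Finset.mem_range]
              try dsimp only
              omega
            · intro j hj
              simp only [Finset.mem_range] at hj
              try dsimp only
              omega
            · intro m hm
              simp only [Finset.mem_Icc] at hm
              try dsimp only
              omega
            · intro j hj
              simp only [Finset.mem_range] at hj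
              try dsimp only
              rw [claim3 j hj]
          · refine (Finset.sum_nbij' (fun (k : ℕ) => (k : ℤ)) (fun m => m.toNat)
              ?_ ?_ ?_ ?_ ?_).symm
            · intro k hk
              simp only [Finset.mem_range] at hk
              simp only [Finset.mem_Icc]
              try dsimp only
              omega
            · intro m hm
              simp only [Finset.mem_Icc] at hm
              simp only [Finset.mem_range]
              try dsimp only
              omega
            · intro k hk
              try dsimp only
              omega
            · intro m hm
              simp only [Finset.mem_Icc] at hm
              try dsimp only
              omega
            · intro k hk
              simp only [Finset.mem_range] at hk
              try dsimp only
              rw [claim2 k (by omega)]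
      _ = (∑ k ∈ Finset.range (N + 1), dotC (a k) (ζ (k : ℤ)))
          + ∑ j ∈ Finset.range nγ, dotC (v (-(j + 1 : ℤ))) (ζ (-(j + 1 : ℤ))) := by
          ring
  have hsum : ∑ k ∈ Finset.range (N + 1), dotC (a k) (ζ (k : ℤ))
      = (∑ k ∈ Finset.range (N + 1), dotC (a k) (ξ (k : ℤ)))
        + ∑ k ∈ Finset.range (N + 1), dotC (a k) (η (k : ℤ)) := by
    rw [← Finset.sum_add_distrib]
    refine Finset.sum_congr rfl fun k _ => ?_
    rw [hζ]
    exact dotC_add_right _ _ _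
  rw [main, hsum]
  ring
end

section
/- Let (Ω, 𝓕, P) be a probability space, T a positive integer, and ξ(m), m ∈ ℤ, real random variables such that every GM increment χ^{(d)}_{μ̄,T s̄}(ξ(m)) is square-integrable. Assume ξ has periodically stationary GM increments with period T, i.e. for all m, k ∈ ℤ and all positive-integer step vectors μ̄, μ̄_1, μ̄_2: E[χ^{(d)}_{μ̄,T s̄}(ξ(m+T))] = E[χ^{(d)}_{μ̄,T s̄}(ξ(m))] and E[χ^{(d)}_{μ̄_1,T s̄}(ξ(m+T)) · χ^{(d)}_{μ̄_2,T s̄}(ξ(k+T))] = E[χ^{(d)}_{μ̄_1,T s̄}(ξ(m)) · χ^{(d)}_{μ̄_2,T s̄}(ξ(k))]. Then the vector sequence ξ_p(m) = ξ(mT + p − 1), p = 1,…,T, has stationary GM increments: for each p, E[χ^{(d)}_{μ̄,s̄}(ξ_p(m))] does not depend on m, and for each p, q, E[χ^{(d)}_{μ̄_1,s̄}(ξ_p(m₀+m)) · χ^{(d)}_{μ̄_2,s̄}(ξ_q(m₀))] does not depend on m₀. -/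
open MeasureTheory

lemma diffStep_iter_comp {V : Type*} [AddCommGroup V] (c T' p : ℤ) (n : ℕ) :
    ∀ (G H : ℤ → V), (∀ m, G m = H (m * T' + p)) →
      ∀ m, ((diffStep c)^[n] G) m = ((diffStep (c * T'))^[n] H) (m * T' + p) := by
  induction n with
  | zero => intro G H h m; simpa using h m
  | succ n ih =>
    intro G H h m
    rw [Function.iterate_succ', Function.iterate_succ']
    have h' := ih G H h
    have e : (m - c) * T' + p = m * T' + p - c * T' := by ring
    calc diffStep c ((diffStep c)^[n] G) m
        = (diffStep c)^[n] G m - (diffStep c)^[n] G (m - c) := rfl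
      _ = (diffStep (c * T'))^[n] H (m * T' + p)
            - (diffStep (c * T'))^[n] H ((m - c) * T' + p) := by rw [h' m, h' (m - c)]
      _ = diffStep (c * T') ((diffStep (c * T'))^[n] H) (m * T' + p) := by rw [e]; rfl

lemma gmInc_comp {V : Type*} [AddCommGroup V] {r : ℕ} (d : Fin r → ℕ)
    (c c' : Fin r → ℤ) (T' p : ℤ) (hc : ∀ i, c' i = c i * T') (f : ℤ → V) (m : ℤ) :
    gmInc d c (fun n => f (n * T' + p)) m = gmInc d c' f (m * T' + p) := by
  suffices H : ∀ l : List (Fin r), ∀ m : ℤ,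
      (l.foldr (fun i g => (diffStep (c i))^[d i] g) (fun n => f (n * T' + p))) m
        = (l.foldr (fun i g => (diffStep (c' i))^[d i] g) f) (m * T' + p) from H _ m
  intro l
  induction l with
  | nil => intro m; rfl
  | cons i l ih =>
    intro m
    simp only [List.foldr_cons]
    rw [hc i]
    exact diffStep_iter_comp (c i) T' p (d i) _ _ ih m

/-- if `ξ` has periodically stationary (square-integrable) GM increments with
period `T`, then the vector sequence `ξ_p(m) = ξ(mT + p - 1)`, `p = 1,…,T`, has stationary
GM increments: the means do not depend on `m` and the second moments do not depend on `m₀`. -/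
theorem periodically_stationary_gives_stationary_vector
    {Ω : Type*} [MeasureSpace Ω] [IsProbabilityMeasure (volume : Measure Ω)]
    (ξ : ℤ → Ω → ℝ) (T : ℕ) (hT : 0 < T)
    (r : ℕ) (d s : Fin r → ℕ) (hd : ∀ i, 0 < d i) (hs : ∀ i, 0 < s i)
    (hL2 : ∀ (μ : Fin r → ℕ), (∀ i, 0 < μ i) → ∀ m : ℤ,
      MemLp (gmInc d (fun i => (μ i : ℤ) * ((T : ℤ) * (s i : ℤ))) ξ m) 2 volume)
    (hmean : ∀ (μ : Fin r → ℕ), (∀ i, 0 < μ i) → ∀ m : ℤ,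
      ∫ ω, gmInc d (fun i => (μ i : ℤ) * ((T : ℤ) * (s i : ℤ))) ξ (m + T) ω
        = ∫ ω, gmInc d (fun i => (μ i : ℤ) * ((T : ℤ) * (s i : ℤ))) ξ m ω)
    (hcov : ∀ (μ₁ μ₂ : Fin r → ℕ), (∀ i, 0 < μ₁ i) → (∀ i, 0 < μ₂ i) → ∀ m k : ℤ,
      ∫ ω, (gmInc d (fun i => (μ₁ i : ℤ) * ((T : ℤ) * (s i : ℤ))) ξ (m + T) ω)
          * (gmInc d (fun i => (μ₂ i : ℤ) * ((T : ℤ) * (s i : ℤ))) ξ (k + T) ω)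
        = ∫ ω, (gmInc d (fun i => (μ₁ i : ℤ) * ((T : ℤ) * (s i : ℤ))) ξ m ω)
          * (gmInc d (fun i => (μ₂ i : ℤ) * ((T : ℤ) * (s i : ℤ))) ξ k ω)) :
    (∀ p : ℕ, 1 ≤ p → p ≤ T → ∀ (μ : Fin r → ℕ), (∀ i, 0 < μ i) → ∀ m m' : ℤ,
      ∫ ω, gmInc d (fun i => (μ i : ℤ) * (s i : ℤ)) (fun n => ξ (n * T + p - 1)) m ω
        = ∫ ω, gmInc d (fun i => (μ i : ℤ) * (s i : ℤ)) (fun n => ξ (n * T + p - 1)) m' ω)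
    ∧
    (∀ p q : ℕ, 1 ≤ p → p ≤ T → 1 ≤ q → q ≤ T →
      ∀ (μ₁ μ₂ : Fin r → ℕ), (∀ i, 0 < μ₁ i) → (∀ i, 0 < μ₂ i) → ∀ m m₀ m₀' : ℤ,
      ∫ ω, (gmInc d (fun i => (μ₁ i : ℤ) * (s i : ℤ)) (fun n => ξ (n * T + p - 1)) (m₀ + m) ω)
          * (gmInc d (fun i => (μ₂ i : ℤ) * (s i : ℤ)) (fun n => ξ (n * T + q - 1)) m₀ ω)
        = ∫ ω, (gmInc d (fun i => (μ₁ i : ℤ) * (s i : ℤ)) (fun n => ξ (n * T + p - 1)) (m₀' + m) ω)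
          * (gmInc d (fun i => (μ₂ i : ℤ) * (s i : ℤ)) (fun n => ξ (n * T + q - 1)) m₀' ω)) := by
  
  constructor
  · intro p hp1 hp2 μ hμ m m'
    have hfun : (fun n : ℤ => ξ (n * (T : ℤ) + (p : ℤ) - 1))
        = fun n : ℤ => ξ (n * (T : ℤ) + ((p : ℤ) - 1)) := by
      funext n; congr 1; ring
    have hc : ∀ i, (μ i : ℤ) * ((T : ℤ) * (s i : ℤ)) = (μ i : ℤ) * (s i : ℤ) * (T : ℤ) := by
      intro i; ring
    have key : ∀ n : ℤ,
        gmInc d (fun i => (μ i : ℤ) * (s i : ℤ)) (fun n => ξ (n * T + p - 1)) n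
          = gmInc d (fun i => (μ i : ℤ) * ((T : ℤ) * (s i : ℤ))) ξ (n * T + ((p : ℤ) - 1)) := by
      intro n
      rw [hfun]
      exact gmInc_comp d _ _ (T : ℤ) ((p : ℤ) - 1) hc ξ n
    rw [key m, key m']
    set G : ℤ → ℝ := fun a => ∫ ω, gmInc d (fun i => (μ i : ℤ) * ((T : ℤ) * (s i : ℤ))) ξ a ω
      with hG
    have hper : ∀ a : ℤ, G (a + T) = G a := hmean μ hμ
    have hshift : ∀ (k : ℤ) (a : ℤ), G (a + k * T) = G a := by
      intro k
      induction k using Int.induction_on with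
      | zero => simp
      | succ k ih =>
        intro a
        have e : a + ((k : ℤ) + 1) * T = (a + k * T) + T := by ring
        rw [e, hper, ih]
      | pred k ih =>
        intro a
        have e : a + (-(k : ℤ)) * T = (a + (-(k : ℤ) - 1) * T) + T := by ring
        have := hper (a + (-(k : ℤ) - 1) * T)
        rw [← e] at this
        rw [← this, ← ih a]
    show G (m * T + ((p : ℤ) - 1)) = G (m' * T + ((p : ℤ) - 1))
    have e : m * (T : ℤ) + ((p : ℤ) - 1) = (m' * T + ((p : ℤ) - 1)) + (m - m') * T := by ring
    rw [e, hshift]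
  · intro p q hp1 hp2 hq1 hq2 μ₁ μ₂ hμ₁ hμ₂ m m₀ m₀'
    have hfunp : (fun n : ℤ => ξ (n * (T : ℤ) + (p : ℤ) - 1))
        = fun n : ℤ => ξ (n * (T : ℤ) + ((p : ℤ) - 1)) := by
      funext n; congr 1; ring
    have hfunq : (fun n : ℤ => ξ (n * (T : ℤ) + (q : ℤ) - 1))
        = fun n : ℤ => ξ (n * (T : ℤ) + ((q : ℤ) - 1)) := by
      funext n; congr 1; ring
    have hc1 : ∀ i, (μ₁ i : ℤ) * ((T : ℤ) * (s i : ℤ)) = (μ₁ i : ℤ) * (s i : ℤ) * (T : ℤ) := by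
      intro i; ring
    have hc2 : ∀ i, (μ₂ i : ℤ) * ((T : ℤ) * (s i : ℤ)) = (μ₂ i : ℤ) * (s i : ℤ) * (T : ℤ) := by
      intro i; ring
    have key1 : ∀ n : ℤ,
        gmInc d (fun i => (μ₁ i : ℤ) * (s i : ℤ)) (fun n => ξ (n * T + p - 1)) n
          = gmInc d (fun i => (μ₁ i : ℤ) * ((T : ℤ) * (s i : ℤ))) ξ (n * T + ((p : ℤ) - 1)) := by
      intro n
      rw [hfunp]
      exact gmInc_comp d _ _ (T : ℤ) ((p : ℤ) - 1) hc1 ξ n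
    have key2 : ∀ n : ℤ,
        gmInc d (fun i => (μ₂ i : ℤ) * (s i : ℤ)) (fun n => ξ (n * T + q - 1)) n
          = gmInc d (fun i => (μ₂ i : ℤ) * ((T : ℤ) * (s i : ℤ))) ξ (n * T + ((q : ℤ) - 1)) := by
      intro n
      rw [hfunq]
      exact gmInc_comp d _ _ (T : ℤ) ((q : ℤ) - 1) hc2 ξ n
    rw [key1, key1, key2, key2]
    set G : ℤ → ℤ → ℝ := fun a b => ∫ ω,
        (gmInc d (fun i => (μ₁ i : ℤ) * ((T : ℤ) * (s i : ℤ))) ξ a ω)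
          * (gmInc d (fun i => (μ₂ i : ℤ) * ((T : ℤ) * (s i : ℤ))) ξ b ω) with hG
    have hper : ∀ a b : ℤ, G (a + T) (b + T) = G a b := hcov μ₁ μ₂ hμ₁ hμ₂
    have hshift : ∀ (k : ℤ) (a b : ℤ), G (a + k * T) (b + k * T) = G a b := by
      intro k
      induction k using Int.induction_on with
      | zero => simp
      | succ k ih =>
        intro a b
        have ea : a + ((k : ℤ) + 1) * T = (a + k * T) + T := by ring
        have eb : b + ((k : ℤ) + 1) * T = (b + k * T) + T := by ring
        rw [ea, eb, hper, ih]
      | pred k ih =>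
        intro a b
        have ea : a + (-(k : ℤ)) * T = (a + (-(k : ℤ) - 1) * T) + T := by ring
        have eb : b + (-(k : ℤ)) * T = (b + (-(k : ℤ) - 1) * T) + T := by ring
        have := hper (a + (-(k : ℤ) - 1) * T) (b + (-(k : ℤ) - 1) * T)
        rw [← ea, ← eb] at this
        rw [← this, ← ih a b]
    show G ((m₀ + m) * T + ((p : ℤ) - 1)) (m₀ * T + ((q : ℤ) - 1))
        = G ((m₀' + m) * T + ((p : ℤ) - 1)) (m₀' * T + ((q : ℤ) - 1))
    have ea : (m₀ + m) * (T : ℤ) + ((p : ℤ) - 1)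
        = ((m₀' + m) * T + ((p : ℤ) - 1)) + (m₀ - m₀') * T := by ring
    have eb : m₀ * (T : ℤ) + ((q : ℤ) - 1)
        = (m₀' * T + ((q : ℤ) - 1)) + (m₀ - m₀') * T := by ring
    rw [ea, eb, hshift]
end

section
/- (Lemma 1.1 / Theorem 1.2, modulus form with real orders.) Let D_0, D_1, …, D_r be real numbers and 1 < s_1 < … < s_r integers; set s_0 = 1. Define M_j = {2πk/s_j : k = 0, 1, …, ⌊s_j/2⌋}, M = ∪_{j=0}^r M_j, D_ν = Σ_{j=0}^r D_j · 1{ν ∈ M_j}, and D̃_ν = D_ν for ν ∈ M∖{0,π} while D̃_ν = D_ν/2 for ν ∈ {0, π}. Then for every λ ∈ ℝ such that e^{iλ s_j} ≠ 1 for all j = 0,…,r, one has ∏_{j=0}^r |1 − e^{−iλ s_j}|^{D_j} = ∏_{ν ∈ M} |(e^{−iν} − e^{iλ})(e^{iν} − e^{iλ})|^{D̃_ν}, where real powers of positive reals are taken. -/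
/-- The set `M_j = {2πk/s : k = 0, 1, …, ⌊s/2⌋}` of frequencies associated to the season `s`. -/
noncomputable def freqSet (s : ℕ) : Finset ℝ :=
  (Finset.range (s / 2 + 1)).image fun k : ℕ => 2 * Real.pi * (k : ℝ) / (s : ℝ)

/-- `D_ν = Σ_j D_j · 1{ν ∈ M_j}` for real orders `D_j`. -/
noncomputable def Dnu (r : ℕ) (D : Fin (r + 1) → ℝ) (s : Fin (r + 1) → ℕ) (ν : ℝ) : ℝ :=
  ∑ j, if ν ∈ freqSet (s j) then D j else 0

/-- `D̃_ν`: equal to `D_ν` for `ν ∉ {0, π}` and to `D_ν / 2` for `ν ∈ {0, π}`. -/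
noncomputable def Dtilde (r : ℕ) (D : Fin (r + 1) → ℝ) (s : Fin (r + 1) → ℕ) (ν : ℝ) : ℝ :=
  if ν = 0 ∨ ν = Real.pi then Dnu r D s ν / 2 else Dnu r D s ν

namespace ModFact

open Finset Complex

/-- The halving factor. -/
noncomputable def hfac (ν : ℝ) : ℝ := if ν = 0 ∨ ν = Real.pi then 1/2 else 1

lemma Dtilde_eq (r : ℕ) (D : Fin (r + 1) → ℝ) (s : Fin (r + 1) → ℕ) (ν : ℝ) :
    Dtilde r D s ν = Dnu r D s ν * hfac ν := by
  unfold Dtilde hfac; split <;> ring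

lemma rpow_sum {α : Type*} {x : ℝ} (hx : 0 < x) (t : Finset α) (f : α → ℝ) :
    x ^ (∑ i ∈ t, f i) = ∏ i ∈ t, x ^ f i := by
  rw [Real.rpow_def_of_pos hx, Finset.mul_sum, Real.exp_sum]
  exact Finset.prod_congr rfl fun i _ => (Real.rpow_def_of_pos hx (f i)).symm

lemma sq_half {x : ℝ} (hx : 0 ≤ x) : (x * x) ^ ((1:ℝ)/2) = x := by
  rw [← Real.sqrt_eq_rpow, Real.sqrt_mul_self hx]

lemma pow_sub_one_eq_prod {n : ℕ} (hn : 0 < n) (w : ℂ) :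
    w ^ n - 1 = ∏ k ∈ Finset.range n, (w - Complex.exp (2 * Real.pi * Complex.I / n) ^ k) := by
  have hζ := Complex.isPrimitiveRoot_exp n hn.ne'
  have hinj : Set.InjOn (fun k : ℕ => Complex.exp (2 * Real.pi * Complex.I / n) ^ k)
      (Finset.range n) := by
    intro a ha b hb hab
    exact hζ.pow_inj (Finset.mem_range.mp ha) (Finset.mem_range.mp hb) hab
  have himg : (Finset.range n).image (fun k : ℕ => Complex.exp (2 * Real.pi * Complex.I / n) ^ k)
      = Polynomial.nthRootsFinset n (1 : ℂ) := by
    apply Finset.eq_of_subset_of_card_le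
    · intro x hx
      rw [Finset.mem_image] at hx
      obtain ⟨k, _, rfl⟩ := hx
      rw [Polynomial.mem_nthRootsFinset hn, ← pow_mul, Nat.mul_comm k n, pow_mul, hζ.pow_eq_one, one_pow]
    · rw [hζ.card_nthRootsFinset, Finset.card_image_of_injOn hinj, Finset.card_range]
  have h := Polynomial.X_pow_sub_one_eq_prod hn hζ
  calc w ^ n - 1 = Polynomial.eval w (Polynomial.X ^ n - 1) := by simp
    _ = ∏ ζ ∈ Polynomial.nthRootsFinset n (1 : ℂ), (w - ζ) := by
        rw [h, Polynomial.eval_prod]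
        exact Finset.prod_congr rfl fun ζ _ => by simp
    _ = ∏ k ∈ Finset.range n, (w - Complex.exp (2 * Real.pi * Complex.I / n) ^ k) := by
        rw [← himg, Finset.prod_image hinj]

/-- The pure combinatorial pairing step. -/
lemma combo (s : ℕ) (hs : 0 < s) (f : ℕ → ℝ) (hf0 : f s = f 0) :
    ∏ k ∈ Finset.range (s/2+1), (if k = 0 ∨ 2*k = s then f k else f (s-k) * f k)
      = ∏ k ∈ Finset.range s, f k := by
  classical
  have h2 : s/2 + 1 ≤ s ∨ s = 1 := by omega
  have hsplit : ∏ k ∈ Finset.range s, f k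
      = (∏ k ∈ Finset.range (s/2+1), f k) * ∏ k ∈ Finset.Ico (s/2+1) s, f k := by
    rcases h2 with h2 | h2
    · rw [Finset.range_eq_Ico, Finset.range_eq_Ico, ← Finset.prod_Ico_consecutive f (Nat.zero_le _) h2]
    · subst h2; simp
  have hIco : ∏ k ∈ Finset.Ico (s/2+1) s, f k
      = ∏ k ∈ (Finset.range (s/2+1)).filter (fun k => ¬(k = 0 ∨ 2*k = s)), f (s - k) := by
    refine (Finset.prod_nbij' (fun k => s - k) (fun k => s - k) ?_ ?_ ?_ ?_ ?_).symm
    · intro a ha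
      simp only [Finset.mem_filter, Finset.mem_range, not_or] at ha
      simp only [Finset.mem_Ico]; omega
    · intro a ha
      simp only [Finset.mem_Ico] at ha
      simp only [Finset.mem_filter, Finset.mem_range, not_or]; omega
    · intro a ha
      simp only [Finset.mem_filter, Finset.mem_range, not_or] at ha
      show s - (s - a) = a; omega
    · intro a ha
      simp only [Finset.mem_Ico] at ha
      show s - (s - a) = a; omega
    · exact fun a _ => rfl
  rw [hsplit, hIco,
    ← Finset.prod_filter_mul_prod_filter_not (Finset.range (s/2+1)) (fun k => k = 0 ∨ 2*k = s) f]
  rw [← Finset.prod_filter_mul_prod_filter_not (Finset.range (s/2+1))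
      (fun k => k = 0 ∨ 2*k = s) (fun k => if k = 0 ∨ 2*k = s then f k else f (s-k) * f k)]
  have hA : ∏ k ∈ (Finset.range (s/2+1)).filter (fun k => k = 0 ∨ 2*k = s),
      (if k = 0 ∨ 2*k = s then f k else f (s-k) * f k)
      = ∏ k ∈ (Finset.range (s/2+1)).filter (fun k => k = 0 ∨ 2*k = s), f k := by
    refine Finset.prod_congr rfl fun k hk => ?_
    simp only [Finset.mem_filter] at hk
    rw [if_pos hk.2]
  have hB : ∏ k ∈ (Finset.range (s/2+1)).filter (fun k => ¬(k = 0 ∨ 2*k = s)),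
      (if k = 0 ∨ 2*k = s then f k else f (s-k) * f k)
      = (∏ k ∈ (Finset.range (s/2+1)).filter (fun k => ¬(k = 0 ∨ 2*k = s)), f (s-k))
        * ∏ k ∈ (Finset.range (s/2+1)).filter (fun k => ¬(k = 0 ∨ 2*k = s)), f k := by
    rw [← Finset.prod_mul_distrib]
    refine Finset.prod_congr rfl fun k hk => ?_
    simp only [Finset.mem_filter] at hk
    rw [if_neg hk.2]
  rw [hA, hB]; ring


lemma nu_eq_zero_iff (s : ℕ) (hs : 0 < s) (k : ℕ) :
    2 * Real.pi * (k : ℝ) / (s : ℝ) = 0 ↔ k = 0 := by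
  rw [div_eq_zero_iff]
  simp [Real.pi_ne_zero, hs.ne', Nat.cast_eq_zero]

lemma nu_eq_pi_iff (s : ℕ) (hs : 0 < s) (k : ℕ) :
    2 * Real.pi * (k : ℝ) / (s : ℝ) = Real.pi ↔ 2 * k = s := by
  have hsne : (s : ℝ) ≠ 0 := Nat.cast_ne_zero.mpr hs.ne'
  rw [div_eq_iff hsne]
  constructor
  · intro h
    have h2 : Real.pi * (2 * (k:ℝ)) = Real.pi * (s:ℝ) := by ring_nf; ring_nf at h; linarith
    have := mul_left_cancel₀ Real.pi_ne_zero h2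
    exact_mod_cast this
  · intro h
    have : (2 * (k:ℝ)) = (s:ℝ) := by exact_mod_cast h
    linear_combination Real.pi * this

lemma freq_inj (s : ℕ) (hs : 0 < s) :
    Set.InjOn (fun k : ℕ => 2 * Real.pi * (k : ℝ) / (s : ℝ)) (Finset.range (s/2+1)) := by
  intro a _ b _ h
  have hsne : (s : ℝ) ≠ 0 := Nat.cast_ne_zero.mpr hs.ne'
  have h1 : 2 * Real.pi * (a:ℝ) = 2 * Real.pi * (b:ℝ) := by
    have h2 := congrArg (fun x : ℝ => x * (s:ℝ)) h
    simp only [div_mul_cancel₀ _ hsne] at h2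
    exact h2
  have h3 : (a : ℝ) = b := mul_left_cancel₀ (by positivity : (0:ℝ) < 2*Real.pi).ne' h1
  exact_mod_cast h3

lemma season (s : ℕ) (hs : 0 < s) (lam : ℝ) :
    (∏ ν ∈ freqSet s,
      ‖(Complex.exp (-(Complex.I * (ν : ℂ))) - Complex.exp (Complex.I * (lam : ℂ)))
          * (Complex.exp (Complex.I * (ν : ℂ)) - Complex.exp (Complex.I * (lam : ℂ)))‖
        ^ (hfac ν))
      = ‖1 - Complex.exp (-(Complex.I * (lam : ℂ) * (s : ℂ)))‖ := by
  have hsne : (s : ℂ) ≠ 0 := Nat.cast_ne_zero.mpr hs.ne'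
  set w : ℂ := Complex.exp (Complex.I * (lam : ℂ)) with hw
  set ζ : ℂ := Complex.exp (2 * Real.pi * Complex.I / (s:ℂ)) with hζdef
  have hζprim := Complex.isPrimitiveRoot_exp s hs.ne'
  set f : ℕ → ℝ := fun k => ‖ζ ^ k - w‖ with hf
  have hexp : ∀ k : ℕ, Complex.exp (Complex.I * ((2 * Real.pi * (k:ℝ) / (s:ℝ) : ℝ) : ℂ)) = ζ ^ k := by
    intro k
    rw [hζdef, ← Complex.exp_nat_mul]
    congr 1
    push_cast
    field_simp
  have hexpneg : ∀ k : ℕ, k ≤ s →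
      Complex.exp (-(Complex.I * ((2 * Real.pi * (k:ℝ) / (s:ℝ) : ℝ) : ℂ))) = ζ ^ (s - k) := by
    intro k hk
    rw [hζdef, ← Complex.exp_nat_mul]
    have harg : ((s - k : ℕ) : ℂ) * (2 * (Real.pi:ℂ) * Complex.I / (s:ℂ))
        = 2 * Real.pi * Complex.I + -(Complex.I * ((2 * Real.pi * (k:ℝ) / (s:ℝ) : ℝ) : ℂ)) := by
      push_cast [Nat.cast_sub hk]
      field_simp
      ring
    rw [harg, Complex.exp_add, Complex.exp_two_pi_mul_I, one_mul]
  have hf0 : f s = f 0 := by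
    simp only [hf, hζdef, hζprim.pow_eq_one, pow_zero]
  have hRHS : ‖1 - Complex.exp (-(Complex.I * (lam : ℂ) * (s : ℂ)))‖
      = ∏ k ∈ Finset.range s, f k := by
    have h1 : (1:ℂ) - Complex.exp (-(Complex.I * (lam:ℂ) * (s:ℂ)))
        = Complex.exp (-(Complex.I * (lam:ℂ) * (s:ℂ)))
          * (Complex.exp (Complex.I * (lam:ℂ) * (s:ℂ)) - 1) := by
      rw [mul_sub, ← Complex.exp_add, mul_one, neg_add_cancel, Complex.exp_zero]
    rw [h1, norm_mul]
    have h2 : ‖Complex.exp (-(Complex.I * (lam:ℂ) * (s:ℂ)))‖ = 1 := by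
      rw [Complex.norm_exp]
      simp
    rw [h2, one_mul]
    have h3 : Complex.exp (Complex.I * (lam:ℂ) * (s:ℂ)) = w ^ s := by
      rw [hw, ← Complex.exp_nat_mul]; ring_nf
    rw [h3, pow_sub_one_eq_prod hs w, norm_prod]
    exact Finset.prod_congr rfl fun k _ => norm_sub_rev _ _
  rw [hRHS, ← combo s hs f hf0, freqSet, Finset.prod_image (freq_inj s hs)]
  refine Finset.prod_congr rfl fun k hk => ?_
  have hks : k ≤ s := le_trans (Nat.lt_succ_iff.mp (Finset.mem_range.mp hk)) (Nat.div_le_self s 2)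
  have habs : ‖
      (Complex.exp (-(Complex.I * ((2 * Real.pi * (k:ℝ) / (s:ℝ) : ℝ) : ℂ))) - w)
        * (Complex.exp (Complex.I * ((2 * Real.pi * (k:ℝ) / (s:ℝ) : ℝ) : ℂ)) - w)‖
      = f (s - k) * f k := by
    rw [hexpneg k hks, hexp k, norm_mul]
  have hh : hfac (2 * Real.pi * (k:ℝ) / (s:ℝ))
      = if k = 0 ∨ 2 * k = s then (1:ℝ)/2 else 1 := by
    unfold hfac
    exact if_congr (or_congr (nu_eq_zero_iff s hs k) (nu_eq_pi_iff s hs k)) rfl rfl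
  rw [habs, hh]
  by_cases hP : k = 0 ∨ 2 * k = s
  · rw [if_pos hP, if_pos hP]
    have hsk : f (s - k) = f k := by
      rcases hP with rfl | h
      · simpa using hf0
      · congr 1; omega
    rw [hsk]
    exact sq_half (norm_nonneg _)
  · rw [if_neg hP, if_neg hP, Real.rpow_one]

lemma exp_freq_pow (s k : ℕ) (hs : 0 < s) :
    Complex.exp (Complex.I * ((2 * Real.pi * (k:ℝ) / (s:ℝ) : ℝ) : ℂ)) ^ s = 1 ∧
    Complex.exp (-(Complex.I * ((2 * Real.pi * (k:ℝ) / (s:ℝ) : ℝ) : ℂ))) ^ s = 1 := by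
  have hsne : (s : ℂ) ≠ 0 := Nat.cast_ne_zero.mpr hs.ne'
  constructor
  · rw [← Complex.exp_nat_mul]
    have : (s:ℂ) * (Complex.I * ((2 * Real.pi * (k:ℝ) / (s:ℝ) : ℝ) : ℂ))
        = (k:ℂ) * (2 * Real.pi * Complex.I) := by
      push_cast; field_simp
    rw [this, Complex.exp_nat_mul_two_pi_mul_I]
  · rw [← Complex.exp_nat_mul]
    have : (s:ℂ) * (-(Complex.I * ((2 * Real.pi * (k:ℝ) / (s:ℝ) : ℝ) : ℂ)))
        = ((-(k:ℤ) : ℤ) : ℂ) * (2 * Real.pi * Complex.I) := by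
      push_cast; field_simp
    rw [this, Complex.exp_int_mul_two_pi_mul_I]

end ModFact

/-- Lemma 1.1 / Theorem 1.2, modulus form with real orders:
`∏_j |1 - e^{-iλ s_j}|^{D_j} = ∏_{ν ∈ M} |(e^{-iν} - e^{iλ})(e^{iν} - e^{iλ})|^{D̃_ν}`. -/
theorem modulus_factorization_real_orders (r : ℕ) (D : Fin (r + 1) → ℝ)
    (s : Fin (r + 1) → ℕ) (hs0 : s 0 = 1) (hmono : StrictMono s) (lam : ℝ)
    (hlam : ∀ j, Complex.exp (Complex.I * (lam : ℂ) * ((s j : ℕ) : ℂ)) ≠ 1) :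
    (∏ j, ‖1 - Complex.exp (-(Complex.I * (lam : ℂ) * ((s j : ℕ) : ℂ)))‖ ^ (D j)) =
      ∏ ν ∈ (Finset.univ.biUnion fun j => freqSet (s j)),
        ‖(Complex.exp (-(Complex.I * (ν : ℂ))) - Complex.exp (Complex.I * (lam : ℂ)))
            * (Complex.exp (Complex.I * (ν : ℂ)) - Complex.exp (Complex.I * (lam : ℂ)))‖
          ^ (Dtilde r D s ν) := by
  classical
  have hspos : ∀ j, 0 < s j := by
    intro j
    have h := hmono.monotone (Fin.zero_le j)
    omega
  set M := Finset.univ.biUnion fun j => freqSet (s j) with hM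
  set X : ℝ → ℝ := fun ν =>
    ‖(Complex.exp (-(Complex.I * (ν : ℂ))) - Complex.exp (Complex.I * (lam : ℂ)))
      * (Complex.exp (Complex.I * (ν : ℂ)) - Complex.exp (Complex.I * (lam : ℂ)))‖ with hX
  have hwpow : ∀ j, Complex.exp (Complex.I * (lam : ℂ)) ^ (s j)
      = Complex.exp (Complex.I * (lam : ℂ) * ((s j : ℕ) : ℂ)) := by
    intro j
    rw [← Complex.exp_nat_mul]; ring_nf
  have hXpos : ∀ ν ∈ M, 0 < X ν := by
    intro ν hν
    rw [hM, Finset.mem_biUnion] at hν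
    obtain ⟨j, -, hνj⟩ := hν
    rw [freqSet, Finset.mem_image] at hνj
    obtain ⟨k, -, rfl⟩ := hνj
    obtain ⟨hp1, hp2⟩ := ModFact.exp_freq_pow (s j) k (hspos j)
    rw [hX]
    apply norm_pos_iff.mpr
    apply mul_ne_zero <;> rw [sub_ne_zero] <;> intro heq
    · exact hlam j (by rw [← hwpow j, ← heq, hp2])
    · exact hlam j (by rw [← hwpow j, ← heq, hp1])
  have step1 : ∀ ν ∈ M, X ν ^ (Dtilde r D s ν)
      = ∏ j, X ν ^ ((if ν ∈ freqSet (s j) then D j else 0) * ModFact.hfac ν) := by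
    intro ν hν
    rw [ModFact.Dtilde_eq, Dnu, Finset.sum_mul, ModFact.rpow_sum (hXpos ν hν)]
  rw [Finset.prod_congr rfl step1, Finset.prod_comm]
  refine Finset.prod_congr rfl fun j _ => ?_
  have hsub : freqSet (s j) ⊆ M := by
    rw [hM]
    exact Finset.subset_biUnion_of_mem (fun j => freqSet (s j)) (Finset.mem_univ j)
  have hstep2 : ∏ ν ∈ M, X ν ^ ((if ν ∈ freqSet (s j) then D j else 0) * ModFact.hfac ν)
      = ∏ ν ∈ freqSet (s j), (X ν ^ (ModFact.hfac ν)) ^ (D j) := by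
    rw [← Finset.prod_subset hsub (fun ν _ hν => by
      rw [if_neg hν, zero_mul, Real.rpow_zero])]
    refine Finset.prod_congr rfl fun ν hν => ?_
    rw [if_pos hν, mul_comm, Real.rpow_mul (norm_nonneg _)]
  rw [hstep2, Real.finset_prod_rpow _ _
    (fun ν _ => Real.rpow_nonneg (norm_nonneg _) _) (D j),
    ModFact.season (s j) (hspos j) lam]
end

section
/- Let ξ : ℤ → V be a sequence in an additive commutative group and let d̄, s̄, μ̄ be vectors of positive integers. Denote by −μ̄ = (−μ_1,…,−μ_r) the reversed steps, where the backward shift with negative step acts as (B_{−μ} ξ)(m) = ξ(m+μ). Then for every m ∈ ℤ: χ^{(d)}_{−μ̄,s̄}(ξ(m)) = (−1)^{d_1+…+d_r} · χ^{(d)}_{μ̄,s̄}(ξ(m + n(γ))), where n(γ) = Σ_{i=1}^r μ_i s_i d_i. -/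
section Aux

variable {V : Type*} [AddCommGroup V]

lemma diffStep_smul (c : ℤ) (a : ℤ) (f : ℤ → V) :
    diffStep c (fun m => a • f m) = fun m => a • diffStep c f m := by
  funext m; simp [diffStep, smul_sub]

lemma diffStep_shift (c T : ℤ) (f : ℤ → V) :
    diffStep c (fun m => f (m + T)) = fun m => diffStep c f (m + T) := by
  funext m
  simp only [diffStep]
  congr 1
  congr 1
  ring

lemma diffStep_iter_smul (c : ℤ) (k : ℕ) (a : ℤ) (f : ℤ → V) :
    (diffStep c)^[k] (fun m => a • f m) = fun m => a • (diffStep c)^[k] f m := by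
  induction k with
  | zero => rfl
  | succ k ih =>
    rw [Function.iterate_succ_apply', ih, diffStep_smul, Function.iterate_succ_apply']

lemma diffStep_iter_shift (c T : ℤ) (k : ℕ) (f : ℤ → V) :
    (diffStep c)^[k] (fun m => f (m + T)) = fun m => (diffStep c)^[k] f (m + T) := by
  induction k with
  | zero => rfl
  | succ k ih =>
    rw [Function.iterate_succ_apply', ih, diffStep_shift, Function.iterate_succ_apply']

lemma diffStep_neg_iter (c : ℤ) (k : ℕ) (f : ℤ → V) :
    (diffStep (-c))^[k] f = fun m => ((-1 : ℤ) ^ k) • (diffStep c)^[k] f (m + k * c) := by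
  induction k with
  | zero => funext m; simp
  | succ k ih =>
    funext m
    rw [Function.iterate_succ_apply', ih]
    show (fun n => ((-1:ℤ)^k) • (diffStep c)^[k] f (n + k * c)) m
        - (fun n => ((-1:ℤ)^k) • (diffStep c)^[k] f (n + k * c)) (m - (-c)) = _
    simp only
    rw [Function.iterate_succ_apply']
    have h1 : m - (-c) + (k : ℤ) * c = m + ((k : ℕ) + 1 : ℤ) * c := by ring
    have h2 : m + ((k : ℕ) + 1 : ℤ) * c - c = m + (k : ℤ) * c := by ring
    rw [h1]
    show _ = ((-1:ℤ)^(k+1)) • (((diffStep c)^[k] f (m + ((k:ℕ)+1:ℤ)*c))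
        - ((diffStep c)^[k] f (m + ((k:ℕ)+1:ℤ)*c - c)))
    rw [h2, pow_succ]
    push_cast
    rw [mul_smul]
    rw [smul_sub, smul_sub]
    simp [neg_smul]
    abel

lemma gm_list (d : Fin r → ℕ) (c : Fin r → ℤ) (l : List (Fin r)) (f : ℤ → V) :
    l.foldr (fun i g => (diffStep (-(c i)))^[d i] g) f =
      fun m => ((-1 : ℤ) ^ (l.map d).sum) •
        l.foldr (fun i g => (diffStep (c i))^[d i] g) f
          (m + (l.map (fun i => (d i : ℤ) * c i)).sum) := by
  induction l with
  | nil => funext m; simp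
  | cons i l ih =>
    funext m
    simp only [List.foldr_cons, List.map_cons, List.sum_cons]
    rw [ih]
    rw [diffStep_iter_smul, diffStep_iter_shift]
    simp only
    rw [diffStep_neg_iter]
    simp only
    rw [smul_smul, ← pow_add]
    have harg : m + (List.map (fun i => (d i : ℤ) * c i) l).sum + (d i : ℤ) * c i
        = m + ((d i : ℤ) * c i + (List.map (fun i => (d i : ℤ) * c i) l).sum) := by ring
    rw [harg, Nat.add_comm (d i) (List.map d l).sum]

end Aux

/-- the GM increment with reversed steps `-μ̄` satisfies
`χ^{(d)}_{-μ̄,s̄}(ξ(m)) = (-1)^{d₁+…+d_r} · χ^{(d)}_{μ̄,s̄}(ξ(m + n(γ)))`. -/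
theorem gmInc_neg_steps {V : Type*} [AddCommGroup V]
    (ξ : ℤ → V) (r : ℕ) (d s μ : Fin r → ℕ)
    (hd : ∀ i, 0 < d i) (hs : ∀ i, 0 < s i) (hμ : ∀ i, 0 < μ i) (m : ℤ) :
    gmInc d (fun i => -((μ i : ℤ)) * (s i : ℤ)) ξ m =
      ((-1 : ℤ) ^ (∑ i, d i)) •
        gmInc d (fun i => (μ i : ℤ) * (s i : ℤ)) ξ
          (m + ∑ i, ((μ i * s i * d i : ℕ) : ℤ)) := by
  rw [gmInc, gmInc]
  simp only [neg_mul]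
  rw [gm_list d (fun i => (μ i : ℤ) * (s i : ℤ)) (List.finRange r) ξ]
  beta_reduce
  rw [Fin.sum_univ_def, Fin.sum_univ_def]
  have hmap : (List.map (fun i => (d i : ℤ) * ((μ i : ℤ) * (s i : ℤ))) (List.finRange r))
      = List.map (fun i => ((μ i * s i * d i : ℕ) : ℤ)) (List.finRange r) :=
    List.map_congr_left (fun i _ => by push_cast; ring)
  rw [hmap]
end
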